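/- The sequence B = (b_0,…,b_m) has the same value as the input binary number: Σ_{i=0}^{m} 2^i · b_i = Σ_{i=0}^{m−1} 2^i · a_i. Consequently B is a compact signed-digit representation of (a_0,…,a_{m−1}). -/

import Mathlib

/-- The carry sequence: `c i = ⋁_{1 ≤ j ≤ i} ((a j ∧ a (j-1)) ∧ ⋀_{j < k ≤ i} (a k ∨ a (k-1)))`. -/
noncomputable def carry (a : ℕ → Bool) (i : ℕ) : Bool :=
  (Finset.Icc 1 i).sup fun j =>
    (a j && a (j - 1)) && (Finset.Ioc j i).inf fun k => a k || a (k - 1)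

/-- The output digits: `b i = (a i ⊕ c i) · (−1)^{a (i+1)}`. -/
noncomputable def digit (a : ℕ → Bool) (i : ℕ) : ℤ :=
  ((Bool.xor (a i) (carry a i)).toNat : ℤ) * (-1) ^ (a (i + 1)).toNat

/-!
The carry satisfies the recursion `c (i+1) = a (i+1) a i ∨ c i (a (i+1) ∨ a i)`, and a case check on
`a i, a (i+1), c i` shows that each digit satisfies `a i + c i = b i + 2 c (i+1)`. Weighting by `2 ^ i`,
the carries telescope, so the first `n` digits have the value of `a` minus `2 ^ n c n`; since `a` is
zero from position `m` on, `c (m+1) = 0`. The recursion and a case check also show that `a i ⊕ c i` and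
`a (i+1) ⊕ c (i+1)` are never both set, which is compactness.
-/

open Finset

lemma carry_zero (a : ℕ → Bool) : carry a 0 = false := by
  simp [carry]

lemma Finset.sup_and_distrib_right {ι : Type*} (s : Finset ι) (f : ι → Bool) (b : Bool) :
    (s.sup f && b) = s.sup fun j => f j && b :=
  sup_inf_distrib_right s f b

lemma carry_succ (a : ℕ → Bool) (i : ℕ) :
    carry a (i + 1) = (a (i + 1) && a i || carry a i && (a (i + 1) || a i)) := by
  have hIcc : Icc 1 (i + 1) = insert (i + 1) (Icc 1 i) :=
    (insert_Icc_right_eq_Icc_add_one (by omega)).symm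
  have hIoc (j : ℕ) (hj : j ≤ i) : Ioc j (i + 1) = insert (i + 1) (Ioc j i) :=
    (insert_Ioc_right_eq_Ioc_add_one hj).symm
  simp only [carry, hIcc, sup_insert, Ioc_self, inf_empty, Nat.add_sub_cancel, top_eq_true,
    Bool.and_true, Finset.sup_and_distrib_right]
  show (_ || _) = (_ || _)
  congr 1
  refine sup_congr rfl fun j hj => ?_
  rw [hIoc j (mem_Icc.1 hj).2, inf_insert, Nat.add_sub_cancel]
  show (_ && (_ && _)) = ((_ && _) && _)
  ac_rfl

lemma digit_add_two_mul_carry_succ (a : ℕ → Bool) (i : ℕ) :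
    digit a i + 2 * (carry a (i + 1)).toNat = (a i).toNat + (carry a i).toNat := by
  rw [digit, carry_succ]
  generalize a i = x, a (i + 1) = y, carry a i = c
  cases x <;> cases y <;> cases c <;> decide

lemma sum_range_two_pow_mul_digit (a : ℕ → Bool) (n : ℕ) :
    ∑ i ∈ range n, (2 : ℤ) ^ i * digit a i
      = ∑ i ∈ range n, (2 : ℤ) ^ i * (a i).toNat - 2 ^ n * (carry a n).toNat := by
  induction n with
  | zero => simp [carry_zero]
  | succ n ih =>
    rw [sum_range_succ, sum_range_succ, ih, eq_sub_of_add_eq (digit_add_two_mul_carry_succ a n)]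
    ring

lemma digit_eq_neg_one_or_eq_zero_or_eq_one (a : ℕ → Bool) (i : ℕ) :
    digit a i = -1 ∨ digit a i = 0 ∨ digit a i = 1 := by
  rw [digit]
  generalize (a i).xor (carry a i) = x, a (i + 1) = y
  cases x <;> cases y <;> decide

lemma digit_mul_digit_succ (a : ℕ → Bool) (i : ℕ) : digit a i * digit a (i + 1) = 0 := by
  rw [digit, digit, carry_succ]
  generalize a i = x, a (i + 1) = y, a (i + 1 + 1) = z, carry a i = c
  cases x <;> cases y <;> cases z <;> cases c <;> decide

/-- `B = (b 0, …, b m)` has the same value as the binary number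
`(a 0, …, a (m−1))`; consequently `B` is a compact signed-digit representation of it. -/
theorem digit_value_eq (m : ℕ) (a : ℕ → Bool) (ha : ∀ i, m ≤ i → a i = false) :
    (∑ i ∈ Finset.range (m + 1), (2 : ℤ) ^ i * digit a i
        = ∑ i ∈ Finset.range m, (2 : ℤ) ^ i * ((a i).toNat : ℤ))
    ∧ (∀ i, digit a i = -1 ∨ digit a i = 0 ∨ digit a i = 1)
    ∧ (∀ i, digit a i * digit a (i + 1) = 0) := by
  refine ⟨?_, digit_eq_neg_one_or_eq_zero_or_eq_one a, digit_mul_digit_succ a⟩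
  have ham : a m = false := ha m le_rfl
  have hcarry : carry a (m + 1) = false := by simp [carry_succ, ham, ha (m + 1) (by omega)]
  rw [sum_range_two_pow_mul_digit, sum_range_succ, ham, hcarry]
  simp
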